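/- arXiv:0805.4373 — 3 statements merged into one kernel-verified Lean document; each statement's English description precedes it below -/
import Mathlib

section
/- Suppose (X,Y) is standard regularly varying on the cone E⊓ = [0,∞]×(0,∞]: as t → ∞, t·P[(X/t, Y/t) ∈ ·] converges vaguely to a non-null Radon measure μ on E⊓ satisfying the conditional non-degeneracy conditions. Then μ cannot be a product measure; that is, there is no finite distribution function G on [0,∞) and no measure ρ on (0,∞] with μ([0,x]×(y,∞]) = G(x)·y^{−1} for all x ≥ 0, y > 0. -/
open MeasureTheory Filter Topology Set
open scoped ENNReal NNReal

noncomputable section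

abbrev Epts : Type := ℝ≥0∞ × ℝ≥0∞

/-- The cone `E⊓ = [0,∞] × (0,∞]`. -/
def Enb : Set Epts := Set.univ ×ˢ Set.Ioi 0

/-- The cone `E⊃ = (0,∞] × [0,∞]`. -/
def Enl : Set Epts := Set.Ioi 0 ×ˢ Set.univ

/-- The cone `E = [0,∞]² \ {(0,0)}`. -/
def Efull : Set Epts := {p | p ≠ (0, 0)}

/-- Vague convergence of `t ↦ t · P[(X/t, Y/t) ∈ ·]` to `μ` on the cone `C`:
convergence on every Borel set that is relatively compact in `C` and whose
boundary is `μ`-null. -/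
def VagueStd {Ω : Type*} [MeasurableSpace Ω] (P : Measure Ω) (X Y : Ω → ℝ)
    (C : Set Epts) (μ : Measure Epts) : Prop :=
  ∀ S : Set Epts, MeasurableSet S → closure S ⊆ C → μ (frontier S) = 0 →
    Tendsto
      (fun t : ℝ =>
        t * (P {ω | (ENNReal.ofReal (X ω / t), ENNReal.ofReal (Y ω / t)) ∈ S}).toReal)
      atTop (𝓝 (μ S).toReal)

/-- The rectangle `[0,x] × (y,∞]`. -/
def rectNb (x y : ℝ) : Set Epts := Set.Iic (ENNReal.ofReal x) ×ˢ Set.Ioi (ENNReal.ofReal y)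

/-- The rectangle `(x,∞] × [0,y]`. -/
def rectNl (x y : ℝ) : Set Epts := Set.Ioi (ENNReal.ofReal x) ×ˢ Set.Iic (ENNReal.ofReal y)

/-- Conditional non-degeneracy conditions on `E⊓`. -/
def NondegNb (μ : Measure Epts) : Prop :=
  (∀ x y : ℝ, 0 ≤ x → 0 < y → μ (rectNb x y) ≠ ⊤) ∧
  (∀ y : ℝ, 0 < y → ∃ x₁ x₂ : ℝ, 0 ≤ x₁ ∧ 0 ≤ x₂ ∧ μ (rectNb x₁ y) ≠ μ (rectNb x₂ y))

/-- Conditional non-degeneracy conditions on `E⊃`. -/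
def NondegNl (ν : Measure Epts) : Prop :=
  (∀ x y : ℝ, 0 < x → 0 ≤ y → ν (rectNl x y) ≠ ⊤) ∧
  (∀ x : ℝ, 0 < x → ∃ y₁ y₂ : ℝ, 0 ≤ y₁ ∧ 0 ≤ y₂ ∧ ν (rectNl x y₁) ≠ ν (rectNl x y₂))

/-- **Lemma 3.1**: if `(X,Y)` is standard regularly varying on `E⊓` with a
conditionally non-degenerate limit `μ`, then `μ` cannot be a product measure:
there is no finite (bounded, nonnegative, nondecreasing) distribution function
`G` on `[0,∞)` with `μ([0,x] × (y,∞]) = G(x)·y⁻¹` for all `x ≥ 0`, `y > 0`. -/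
theorem standard_limit_not_product
    {Ω : Type*} [MeasurableSpace Ω] (P : Measure Ω) [IsProbabilityMeasure P]
    (X Y : Ω → ℝ) (μ : Measure Epts) (hμne : μ ≠ 0)
    (hμ : VagueStd P X Y Enb μ) (hμnd : NondegNb μ) :
    ¬ ∃ G : ℝ → ℝ, Monotone G ∧ (∀ x, 0 ≤ G x) ∧ (∃ M : ℝ, ∀ x, G x ≤ M) ∧
      ∀ x y : ℝ, 0 ≤ x → 0 < y → (μ (rectNb x y)).toReal = G x / y := by
  rintro ⟨G, hmono, hGnn, ⟨M, hM⟩, hprod⟩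
  obtain ⟨hfin, hnd⟩ := hμnd
  have hmeas : ∀ x y : ℝ, MeasurableSet (rectNb x y) := fun x y =>
    measurableSet_Iic.prod measurableSet_Ioi
  have hsub : ∀ {x x' y : ℝ}, x' ≤ x → rectNb x' y ⊆ rectNb x y := by
    intro x x' y h
    exact Set.prod_mono (Set.Iic_subset_Iic.mpr (ENNReal.ofReal_le_ofReal h)) subset_rfl
  -- horizontal lines are null
  have hline1 : ∀ x y : ℝ, 0 ≤ x → 0 < y →
      μ (Set.Iic (ENNReal.ofReal x) ×ˢ {ENNReal.ofReal y}) = 0 := by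
    intro x y hx hy
    set L := Set.Iic (ENNReal.ofReal x) ×ˢ ({ENNReal.ofReal y} : Set ℝ≥0∞) with hL
    have hdiff : ∀ y' ∈ Set.Ioo (0:ℝ) y, L ⊆ rectNb x y' \ rectNb x y := by
      rintro y' ⟨hy'0, hy'y⟩ p ⟨h1, h2⟩
      simp only [Set.mem_singleton_iff] at h2
      refine ⟨⟨h1, ?_⟩, fun hcon => ?_⟩
      · rw [Set.mem_Ioi, h2]
        exact (ENNReal.ofReal_lt_ofReal_iff hy).mpr hy'y
      · have := hcon.2
        rw [Set.mem_Ioi, h2] at this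
        exact lt_irrefl _ this
    have hfinL : μ L ≠ ⊤ := by
      have := measure_mono (μ := μ) ((hdiff (y/2) ⟨by positivity, by linarith⟩).trans
        Set.diff_subset)
      exact (this.trans_lt (lt_top_iff_ne_top.mpr (hfin x (y/2) hx (by positivity)))).ne
    have hbound : ∀ y' ∈ Set.Ioo (0:ℝ) y, (μ L).toReal ≤ G x / y' - G x / y := by
      rintro y' hy'
      have h1 : μ L ≤ μ (rectNb x y' \ rectNb x y) := measure_mono (hdiff y' hy')
      have hYsub : rectNb x y ⊆ rectNb x y' :=
        Set.prod_mono subset_rfl (Set.Ioi_subset_Ioi (ENNReal.ofReal_le_ofReal hy'.2.le))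
      have h2 : μ (rectNb x y' \ rectNb x y) = μ (rectNb x y') - μ (rectNb x y) :=
        measure_diff hYsub (hmeas x y).nullMeasurableSet (hfin x y hx hy)
      have h3 : μ (rectNb x y) ≤ μ (rectNb x y') := by
        refine measure_mono (Set.prod_mono subset_rfl (Set.Ioi_subset_Ioi ?_))
        exact ENNReal.ofReal_le_ofReal hy'.2.le
      calc (μ L).toReal ≤ (μ (rectNb x y') - μ (rectNb x y)).toReal := by
            exact ENNReal.toReal_mono (ENNReal.sub_ne_top (hfin x y' hx hy'.1))
              (h2 ▸ h1)
        _ = G x / y' - G x / y := by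
            rw [ENNReal.toReal_sub_of_le h3 (hfin x y' hx hy'.1),
              hprod x y' hx hy'.1, hprod x y hx hy]
    have htend : Tendsto (fun y' : ℝ => G x / y' - G x / y) (𝓝[<] y) (𝓝 0) := by
      have hc : ContinuousAt (fun y' : ℝ => G x / y' - G x / y) y :=
        ((continuousAt_const.div continuousAt_id hy.ne')).sub continuousAt_const
      have := hc.tendsto.mono_left (nhdsWithin_le_nhds (s := Set.Iio y))
      simpa using this
    have hev : ∀ᶠ y' in 𝓝[<] y, (μ L).toReal ≤ G x / y' - G x / y := by
      filter_upwards [Ioo_mem_nhdsLT_of_mem (Set.mem_Ioc.mpr ⟨hy, le_rfl⟩)] with y' hy'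
      exact hbound y' hy'
    have hle0 : (μ L).toReal ≤ 0 := ge_of_tendsto htend hev
    have : (μ L).toReal = 0 := le_antisymm hle0 ENNReal.toReal_nonneg
    rcases (ENNReal.toReal_eq_zero_iff _).mp this with h | h
    · exact h
    · exact absurd h hfinL
  -- vertical half-lines at continuity points are null
  have hline2 : ∀ x y : ℝ, 0 < x → 0 < y → ContinuousAt G x →
      μ ({ENNReal.ofReal x} ×ˢ Set.Ioi (ENNReal.ofReal y)) = 0 := by
    intro x y hx hy hcx
    set L := ({ENNReal.ofReal x} : Set ℝ≥0∞) ×ˢ Set.Ioi (ENNReal.ofReal y) with hL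
    have hdiff : ∀ x' ∈ Set.Ioo (0:ℝ) x, L ⊆ rectNb x y \ rectNb x' y := by
      rintro x' ⟨hx'0, hx'x⟩ p ⟨h1, h2⟩
      simp only [Set.mem_singleton_iff] at h1
      refine ⟨⟨?_, h2⟩, fun hcon => ?_⟩
      · rw [Set.mem_Iic, h1]
      · have := hcon.1
        rw [Set.mem_Iic, h1] at this
        exact absurd this (not_le.mpr ((ENNReal.ofReal_lt_ofReal_iff hx).mpr hx'x))
    have hfinL : μ L ≠ ⊤ := by
      have := measure_mono (μ := μ) ((hdiff (x/2) ⟨by positivity, by linarith⟩).trans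
        Set.diff_subset)
      exact (this.trans_lt (lt_top_iff_ne_top.mpr (hfin x y hx.le hy))).ne
    have hbound : ∀ x' ∈ Set.Ioo (0:ℝ) x, (μ L).toReal ≤ G x / y - G x' / y := by
      rintro x' hx'
      have h1 : μ L ≤ μ (rectNb x y \ rectNb x' y) := measure_mono (hdiff x' hx')
      have h2 : μ (rectNb x y \ rectNb x' y) = μ (rectNb x y) - μ (rectNb x' y) :=
        measure_diff (hsub hx'.2.le) (hmeas x' y).nullMeasurableSet (hfin x' y hx'.1.le hy)
      have h3 : μ (rectNb x' y) ≤ μ (rectNb x y) := measure_mono (hsub hx'.2.le)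
      calc (μ L).toReal ≤ (μ (rectNb x y) - μ (rectNb x' y)).toReal := by
            exact ENNReal.toReal_mono (ENNReal.sub_ne_top (hfin x y hx.le hy))
              (h2 ▸ h1)
        _ = G x / y - G x' / y := by
            rw [ENNReal.toReal_sub_of_le h3 (hfin x y hx.le hy),
              hprod x y hx.le hy, hprod x' y hx'.1.le hy]
    have htend : Tendsto (fun x' : ℝ => G x / y - G x' / y) (𝓝[<] x) (𝓝 0) := by
      have hc : Tendsto (fun x' : ℝ => G x / y - G x' / y) (𝓝 x) (𝓝 (G x / y - G x / y)) :=
        tendsto_const_nhds.sub (hcx.tendsto.div_const y)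
      have := hc.mono_left (nhdsWithin_le_nhds (s := Set.Iio x))
      simpa using this
    have hev : ∀ᶠ x' in 𝓝[<] x, (μ L).toReal ≤ G x / y - G x' / y := by
      filter_upwards [Ioo_mem_nhdsLT_of_mem (Set.mem_Ioc.mpr ⟨hx, le_rfl⟩)] with x' hx'
      exact hbound x' hx'
    have hle0 : (μ L).toReal ≤ 0 := ge_of_tendsto htend hev
    have : (μ L).toReal = 0 := le_antisymm hle0 ENNReal.toReal_nonneg
    rcases (ENNReal.toReal_eq_zero_iff _).mp this with h | h
    · exact h
    · exact absurd h hfinL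
  -- frontiers are null
  have hfront : ∀ x y : ℝ, 0 < x → 0 < y → ContinuousAt G x →
      μ (frontier (rectNb x y)) = 0 := by
    intro x y hx hy hcx
    have hsub2 : frontier (rectNb x y) ⊆
        (Set.Iic (ENNReal.ofReal x) ×ˢ {ENNReal.ofReal y}) ∪
        ({ENNReal.ofReal x} ×ˢ Set.Ioi (ENNReal.ofReal y)) := by
      rw [rectNb, frontier_prod_eq]
      rintro ⟨p, q⟩ hp
      rcases hp with ⟨hp1, hp2⟩ | ⟨hp1, hp2⟩
      · left
        refine ⟨by simpa [isClosed_Iic.closure_eq] using hp1, ?_⟩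
        have : frontier (Set.Ioi (ENNReal.ofReal y)) ⊆ {ENNReal.ofReal y} := by
          rw [isOpen_Ioi.frontier_eq]
          intro z hz
          have h1 : z ∈ Set.Ici (ENNReal.ofReal y) :=
            closure_minimal Set.Ioi_subset_Ici_self isClosed_Ici hz.1
          exact le_antisymm (not_lt.mp hz.2) (Set.mem_Ici.mp h1) ▸ rfl
        exact this hp2
      · have hq : q ∈ Set.Ici (ENNReal.ofReal y) := by
          have : closure (Set.Ioi (ENNReal.ofReal y)) ⊆ Set.Ici (ENNReal.ofReal y) :=
            closure_minimal Set.Ioi_subset_Ici_self isClosed_Ici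
          exact this hp2
        have hpx : p = ENNReal.ofReal x := frontier_Iic_subset _ hp1
        rcases eq_or_lt_of_le (Set.mem_Ici.mp hq) with hq | hq
        · left
          exact ⟨by simp [hpx], by simp [← hq]⟩
        · right
          exact ⟨by simp [hpx], hq⟩
    refine measure_mono_null hsub2 (measure_union_null ?_ ?_)
    · exact hline1 x y hx.le hy
    · exact hline2 x y hx hy hcx
  -- closure is in the cone
  have hclos : ∀ x y : ℝ, 0 < y → closure (rectNb x y) ⊆ Enb := by
    intro x y hy
    rw [rectNb, closure_prod_eq]
    refine Set.prod_mono (Set.subset_univ _) ?_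
    refine (closure_minimal Set.Ioi_subset_Ici_self isClosed_Ici).trans ?_
    intro a ha
    exact lt_of_lt_of_le (by simpa using ENNReal.ofReal_pos.mpr hy) (Set.mem_Ici.mp ha)
  -- the vague limit applies
  have hlim : ∀ x y : ℝ, 0 < x → 0 < y → ContinuousAt G x →
      Tendsto (fun t : ℝ => t * (P {ω |
          (ENNReal.ofReal (X ω / t), ENNReal.ofReal (Y ω / t)) ∈ rectNb x y}).toReal)
        atTop (𝓝 (G x / y)) := by
    intro x y hx hy hcx
    have := hμ (rectNb x y) (hmeas x y) (hclos x y hy) (hfront x y hx hy hcx)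
    rwa [hprod x y hx.le hy] at this
  -- scaling: G is constant at continuity points
  have hGeq : ∀ u v : ℝ, 0 < u → 0 < v → ContinuousAt G u → ContinuousAt G v →
      G u = G v := by
    intro u v hu hv hcu hcv
    set c : ℝ := u / v with hc
    have hc0 : 0 < c := div_pos hu hv
    have h1 := hlim u 1 hu one_pos hcu
    have h2 := hlim v (v / u) hv (div_pos hv hu) hcv
    have hev : ∀ t : ℝ, 0 < t →
        {ω | (ENNReal.ofReal (X ω / t), ENNReal.ofReal (Y ω / t)) ∈ rectNb v (v / u)} =
        {ω | (ENNReal.ofReal (X ω / (t / c)), ENNReal.ofReal (Y ω / (t / c))) ∈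
          rectNb u 1} := by
      intro t ht
      ext ω
      simp only [rectNb, Set.mem_setOf_eq, Set.mem_prod, Set.mem_Iic, Set.mem_Ioi]
      have htc : X ω / (t / c) = (X ω / t) * c := by
        field_simp
      have htc' : Y ω / (t / c) = (Y ω / t) * c := by
        field_simp
      have e1 : ENNReal.ofReal (X ω / t) ≤ ENNReal.ofReal v ↔ X ω / t ≤ v :=
        ENNReal.ofReal_le_ofReal_iff hv.le
      have e2 : ENNReal.ofReal (X ω / (t / c)) ≤ ENNReal.ofReal u ↔ X ω / (t / c) ≤ u :=
        ENNReal.ofReal_le_ofReal_iff hu.le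
      have e3 : ENNReal.ofReal (v / u) < ENNReal.ofReal (Y ω / t) ↔ v / u < Y ω / t :=
        ENNReal.ofReal_lt_ofReal_iff_of_nonneg (div_pos hv hu).le
      have e4 : ENNReal.ofReal 1 < ENNReal.ofReal (Y ω / (t / c)) ↔ 1 < Y ω / (t / c) :=
        ENNReal.ofReal_lt_ofReal_iff_of_nonneg zero_le_one
      rw [e1, e2, e3, e4, htc, htc']
      have huc : u / c = v := by
        rw [hc]; field_simp
      constructor
      · rintro ⟨hA, hB⟩
        refine ⟨?_, ?_⟩
        · rw [← huc] at hA
          exact (le_div_iff₀ hc0).mp hA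
        · rw [← one_div_div u v, ← hc] at hB
          exact (div_lt_iff₀ hc0).mp hB
      · rintro ⟨hA, hB⟩
        refine ⟨?_, ?_⟩
        · rw [← huc]
          exact (le_div_iff₀ hc0).mpr hA
        · rw [← one_div_div u v, ← hc]
          exact (div_lt_iff₀ hc0).mpr hB
    set f : ℝ → ℝ := fun t => t * (P {ω |
        (ENNReal.ofReal (X ω / t), ENNReal.ofReal (Y ω / t)) ∈ rectNb u 1}).toReal with hf
    set g : ℝ → ℝ := fun t => t * (P {ω |
        (ENNReal.ofReal (X ω / t), ENNReal.ofReal (Y ω / t)) ∈ rectNb v (v / u)}).toReal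
      with hg
    have hgf : (fun t => c * f (t / c)) =ᶠ[atTop] g := by
      filter_upwards [eventually_gt_atTop 0] with t ht
      have hXY : X = X := rfl
      simp only [hf, hg]
      rw [hev t ht]
      have : (fun ω => X ω / (t / c)) = fun ω => X ω / (t / c) := rfl
      have hct : c * (t / c * (P {ω | (ENNReal.ofReal (X ω / (t / c)),
          ENNReal.ofReal (Y ω / (t / c))) ∈ rectNb u 1}).toReal) =
          t * (P {ω | (ENNReal.ofReal (X ω / (t / c)),
          ENNReal.ofReal (Y ω / (t / c))) ∈ rectNb u 1}).toReal := by
        rw [← mul_assoc, mul_div_cancel₀ _ hc0.ne']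
      exact hct
    have hcomp : Tendsto (fun t => c * f (t / c)) atTop (𝓝 (c * (G u / 1))) :=
      (h1.comp (tendsto_id.atTop_div_const hc0)).const_mul c
    have huniq : G v / (v / u) = c * (G u / 1) :=
      tendsto_nhds_unique h2 (hcomp.congr' hgf)
    rw [div_one, div_div_eq_mul_div, hc] at huniq
    field_simp at huniq
    rcases mul_right_cancel₀ hu.ne' (by rw [huniq] : G v * u = G u * u) with h
    exact h.symm ▸ rfl
  -- continuity points are dense
  have hex : ∀ p q : ℝ, p < q → ∃ z ∈ Set.Ioo p q, ContinuousAt G z := by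
    intro p q hpq
    by_contra h
    push_neg at h
    have hsub3 : Set.Ioo p q ⊆ {z | ¬ContinuousAt G z} := fun z hz => h z hz
    have hcnt : (Set.Ioo p q).Countable := hmono.countable_not_continuousAt.mono hsub3
    have h0 : volume (Set.Ioo p q) = 0 := hcnt.measure_zero _
    rw [Real.volume_Ioo] at h0
    rw [ENNReal.ofReal_eq_zero] at h0
    linarith
  obtain ⟨d, hd01, hdc⟩ := hex 0 1 one_pos
  set a : ℝ := G d with ha
  have hGa : ∀ x : ℝ, 0 < x → G x = a := by
    intro x hx
    obtain ⟨d₁, hd₁, hc₁⟩ := hex 0 x hx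
    obtain ⟨d₂, hd₂, hc₂⟩ := hex x (x + 1) (by linarith)
    have e1 : G d₁ = a := hGeq d₁ d hd₁.1 hd01.1 hc₁ hdc
    have e2 : G d₂ = a := hGeq d₂ d (lt_trans hx hd₂.1) hd01.1 hc₂ hdc
    have l1 : G d₁ ≤ G x := hmono hd₁.2.le
    have l2 : G x ≤ G d₂ := hmono hd₂.1.le
    linarith
  -- G 0 = a via continuity from above
  have hG0 : G 0 = a := by
    set s : ℕ → Set Epts := fun n => rectNb (1 / ((n : ℝ) + 1)) 1 with hs
    have hμs : ∀ n : ℕ, μ (s n) = ENNReal.ofReal a := by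
      intro n
      have hn : (0:ℝ) < 1 / ((n : ℝ) + 1) := by positivity
      have hv := hprod (1 / ((n : ℝ) + 1)) 1 hn.le one_pos
      rw [hGa _ hn, div_one] at hv
      rw [← ENNReal.ofReal_toReal (hfin _ 1 hn.le one_pos), hv]
    have hanti : Antitone s := by
      intro n m hnm
      refine hsub (one_div_le_one_div_of_le (by positivity) ?_)
      have : (n : ℝ) ≤ m := Nat.cast_le.mpr hnm
      linarith
    have hint : (⋂ n, s n) = rectNb 0 1 := by
      ext p
      simp only [hs, Set.mem_iInter, rectNb, Set.mem_prod, Set.mem_Iic, Set.mem_Ioi]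
      constructor
      · intro h
        refine ⟨?_, (h 0).2⟩
        have hle : ∀ n : ℕ, p.1 ≤ ENNReal.ofReal (1 / ((n : ℝ) + 1)) := fun n => (h n).1
        have htnd : Tendsto (fun n : ℕ => ENNReal.ofReal (1 / ((n : ℝ) + 1))) atTop
            (𝓝 0) := by
          have := ENNReal.tendsto_ofReal tendsto_one_div_add_atTop_nhds_zero_nat
          simpa using this
        have := ge_of_tendsto' htnd hle
        simpa using this
      · rintro ⟨h1, h2⟩ n
        refine ⟨le_trans ?_ zero_le, h2⟩
        simpa using h1
    have htend := tendsto_measure_iInter_atTop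
      (fun n => (hmeas _ _).nullMeasurableSet) hanti
      ⟨0, hfin _ 1 (by norm_num) one_pos⟩
    rw [hint] at htend
    have hconst : Tendsto (μ ∘ s) atTop (𝓝 (ENNReal.ofReal a)) := by
      have : (μ ∘ s) = fun _ => ENNReal.ofReal a := funext fun n => hμs n
      rw [this]
      exact tendsto_const_nhds
    have heq : μ (rectNb 0 1) = ENNReal.ofReal a := tendsto_nhds_unique htend hconst
    have := hprod 0 1 le_rfl one_pos
    rw [heq, div_one, ENNReal.toReal_ofReal (ha ▸ hGnn d)] at this
    exact this.symm
  -- conclude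
  obtain ⟨x₁, x₂, hx₁, hx₂, hne⟩ := hnd 1 one_pos
  have hGx : ∀ x : ℝ, 0 ≤ x → G x = a := by
    intro x hx
    rcases eq_or_lt_of_le hx with h | h
    · rw [← h]; exact hG0
    · exact hGa x h
  have hv1 : (μ (rectNb x₁ 1)).toReal = a := by
    rw [hprod x₁ 1 hx₁ one_pos, hGx x₁ hx₁, div_one]
  have hv2 : (μ (rectNb x₂ 1)).toReal = a := by
    rw [hprod x₂ 1 hx₂ one_pos, hGx x₂ hx₂, div_one]
  exact hne ((ENNReal.toReal_eq_toReal_iff' (hfin x₁ 1 hx₁ one_pos)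
    (hfin x₂ 1 hx₂ one_pos)).mp (hv1.trans hv2.symm))
end
end

section
/- Let μ** be a Radon measure on E⊓ = [0,∞]×(0,∞] homogeneous of order −1 with angular measure S on [0,1) (S(Λ) = μ**{(x,y) : x+y > 1, x/(x+y) ∈ Λ}). Then the function H**(x) := μ**([0,x]×(1,∞]), x ≥ 0, is a probability distribution function (i.e., H**(x) → 1 as x → ∞) if and only if ∫₀¹ (1−w) S(dw) = 1. -/
open MeasureTheory Filter Topology Set
open scoped ENNReal NNReal

noncomputable section

/-- The angular coordinate `x/(x+y)` on `[0,∞]²` (equal to `1` when `x = ∞`). -/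
def ang (p : Epts) : ℝ := if p.1 = ⊤ then 1 else (p.1 / (p.1 + p.2)).toReal

/-- `μ` is homogeneous of order `-1`: `μ(cB) = c⁻¹ μ(B)` for all `c > 0`. -/
def HomogMinusOne (μ : Measure Epts) : Prop :=
  ∀ c : ℝ, 0 < c → ∀ B : Set Epts, MeasurableSet B →
    μ ((fun p : Epts => (ENNReal.ofReal c * p.1, ENNReal.ofReal c * p.2)) '' B) =
      (ENNReal.ofReal c)⁻¹ * μ B

lemma measurable_ang : Measurable ang := by
  have h1 : MeasurableSet {p : Epts | p.1 = ⊤} :=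
    measurable_fst (measurableSet_singleton ⊤)
  exact Measurable.ite h1 measurable_const
    ((measurable_fst.div (measurable_fst.add measurable_snd)).ennreal_toReal)

lemma ang_nonneg (p : Epts) : 0 ≤ ang p := by
  unfold ang; split
  · norm_num
  · exact ENNReal.toReal_nonneg

lemma ang_lt_one (p : Epts) (h1 : p.1 ≠ ⊤) (h2 : 0 < p.2) : ang p < 1 := by
  unfold ang; rw [if_neg h1]
  by_cases hb : p.2 = ⊤
  · simp [hb, ENNReal.div_top]
  · have hs : p.1 + p.2 ≠ ⊤ := ENNReal.add_ne_top.mpr ⟨h1, hb⟩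
    rw [ENNReal.toReal_div]
    have hb' : 0 < p.2.toReal := ENNReal.toReal_pos h2.ne' hb
    have ha' : 0 ≤ p.1.toReal := ENNReal.toReal_nonneg
    rw [ENNReal.toReal_add h1 hb]
    rw [div_lt_one (by linarith)]
    linarith

lemma toReal_snd (p : Epts) (h1 : p.1 ≠ ⊤) (h2 : p.2 ≠ ⊤) (hs : p.1 + p.2 ≠ 0) :
    p.2.toReal = (p.1 + p.2).toReal * (1 - ang p) := by
  have hst : p.1 + p.2 ≠ ⊤ := ENNReal.add_ne_top.mpr ⟨h1, h2⟩
  have hsr : 0 < (p.1 + p.2).toReal := ENNReal.toReal_pos hs hst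
  rw [ENNReal.toReal_add h1 h2] at hsr
  unfold ang
  rw [if_neg h1, ENNReal.toReal_div, ENNReal.toReal_add h1 h2]
  field_simp
  ring


lemma ang_smul (c : ℝ≥0∞) (hc0 : c ≠ 0) (hct : c ≠ ⊤) (p : Epts) :
    ang (c * p.1, c * p.2) = ang p := by
  unfold ang
  by_cases h : p.1 = ⊤
  · simp [h, ENNReal.mul_top hc0]
  · have h' : c * p.1 ≠ ⊤ := ENNReal.mul_ne_top hct h
    rw [if_neg h', if_neg h]
    show ((c * p.1) / (c * p.1 + c * p.2)).toReal = _
    rw [← mul_add, ENNReal.mul_div_mul_left _ _ hc0 hct]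

lemma slice_meas (Λ : Set ℝ) (hΛ : MeasurableSet Λ) (u : ℝ≥0∞) :
    MeasurableSet {p : Epts | u < p.1 + p.2 ∧ ang p ∈ Λ} :=
  (measurableSet_lt measurable_const (measurable_fst.add measurable_snd)).inter
    (measurable_ang hΛ)

lemma scale_slice (μ : Measure Epts) (hhom : HomogMinusOne μ) {Λ : Set ℝ}
    (hΛ : MeasurableSet Λ) {t : ℝ} (ht : 0 < t) :
    μ {p : Epts | ENNReal.ofReal t < p.1 + p.2 ∧ ang p ∈ Λ} =
      (ENNReal.ofReal t)⁻¹ * μ {p : Epts | 1 < p.1 + p.2 ∧ ang p ∈ Λ} := by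
  set c := ENNReal.ofReal t with hc
  have hc0 : c ≠ 0 := by simpa [hc] using ht
  have hct : c ≠ ⊤ := ENNReal.ofReal_ne_top
  have hi0 : c⁻¹ ≠ 0 := ENNReal.inv_ne_zero.mpr hct
  have hit : c⁻¹ ≠ ⊤ := ENNReal.inv_ne_top.mpr hc0
  have himg : (fun p : Epts => (c * p.1, c * p.2)) '' {p : Epts | 1 < p.1 + p.2 ∧ ang p ∈ Λ}
      = {p : Epts | c < p.1 + p.2 ∧ ang p ∈ Λ} := by
    ext q
    constructor
    · rintro ⟨p, ⟨h1, h2⟩, rfl⟩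
      refine ⟨?_, ?_⟩
      · calc c = c * 1 := (mul_one c).symm
          _ < c * (p.1 + p.2) := (ENNReal.mul_lt_mul_iff_right hc0 hct).mpr h1
          _ = c * p.1 + c * p.2 := mul_add _ _ _
      · rw [ang_smul c hc0 hct p]; exact h2
    · rintro ⟨h1, h2⟩
      refine ⟨(c⁻¹ * q.1, c⁻¹ * q.2), ⟨?_, ?_⟩, ?_⟩
      · calc (1:ℝ≥0∞) = c⁻¹ * c := (ENNReal.inv_mul_cancel hc0 hct).symm
          _ < c⁻¹ * (q.1 + q.2) := (ENNReal.mul_lt_mul_iff_right hi0 hit).mpr h1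
          _ = c⁻¹ * q.1 + c⁻¹ * q.2 := mul_add _ _ _
      · show ang (c⁻¹ * q.1, c⁻¹ * q.2) ∈ Λ
        rw [ang_smul c⁻¹ hi0 hit q]; exact h2
      · show (c * (c⁻¹ * q.1), c * (c⁻¹ * q.2)) = q
        rw [← mul_assoc, ← mul_assoc, ENNReal.mul_inv_cancel hc0 hct, one_mul, one_mul]
  have := hhom t ht _ (slice_meas Λ hΛ 1)
  rw [← hc, himg] at this
  exact this

lemma key_measure_eq (μ : Measure Epts) (hhom : HomogMinusOne μ) (S : Measure ℝ)
    (hS : ∀ Λ : Set ℝ, MeasurableSet Λ → S Λ = μ {p : Epts | 1 < p.1 + p.2 ∧ ang p ∈ Λ}) :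
    μ {p : Epts | p.1 ≠ ⊤ ∧ 1 < p.2} =
      ∫⁻ w in Set.Ico (0:ℝ) 1, ENNReal.ofReal (1 - w) ∂S := by
  classical
  set M := μ {p : Epts | p.1 ≠ ⊤ ∧ 1 < p.2} with hMdef
  set I := ∫⁻ w in Set.Ico (0:ℝ) 1, ENNReal.ofReal (1 - w) ∂S with hIdef
  suffices key : ∀ q : ℝ, 0 < q → q < 1 →
      ENNReal.ofReal q * M ≤ I ∧ ENNReal.ofReal q * I ≤ M by
    have two : ∀ a : ℝ≥0∞, a < 1 → a * M ≤ I ∧ a * I ≤ M := by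
      intro a ha
      rcases eq_or_ne a 0 with rfl | ha0
      · simp
      · have hat : a ≠ ⊤ := ne_top_of_lt (lt_of_lt_of_le ha le_top)
        have h1 : 0 < a.toReal := ENNReal.toReal_pos ha0 hat
        have h2 : a.toReal < 1 := by
          have := (ENNReal.toReal_lt_toReal hat (by simp : (1:ℝ≥0∞) ≠ ⊤)).mpr ha
          simpa using this
        have ha' : a = ENNReal.ofReal a.toReal := (ENNReal.ofReal_toReal hat).symm
        rw [ha']
        exact key a.toReal h1 h2
    exact le_antisymm
      (ENNReal.le_of_forall_lt_one_mul_le fun a ha => (two a ha).1)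
      (ENNReal.le_of_forall_lt_one_mul_le fun a ha => (two a ha).2)
  intro q hq0 hq1
  set w : ℕ → ℝ := fun k => 1 - q ^ k with hwdef
  have hw : ∀ k, 1 - w k = q ^ k := fun k => by simp [hwdef]
  have hqk : ∀ k : ℕ, 0 < q ^ k := fun k => pow_pos hq0 k
  have hqk1 : ∀ k : ℕ, q ^ k ≤ 1 := fun k => pow_le_one₀ hq0.le hq1.le
  have hwmono : Monotone w := monotone_nat_of_le_succ (fun k => by
    have h : q ^ (k+1) ≤ q ^ k := by
      calc q^(k+1) = q^k * q := pow_succ q k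
        _ ≤ q^k * 1 := by nlinarith [hqk k]
        _ = q^k := mul_one _
    simp only [hwdef]; linarith)
  have hw0 : w 0 = 0 := by simp [hwdef]
  have hwlt1 : ∀ k, w k < 1 := fun k => by
    have := hqk k; simp only [hwdef]; linarith
  have hw0le : ∀ k, 0 ≤ w k := fun k => by
    have := hqk1 k; simp only [hwdef]; linarith
  have hcov : ∀ v : ℝ, 0 ≤ v → v < 1 → ∃ k, v ∈ Set.Ico (w k) (w (k+1)) := by
    intro v hv0 hv1
    have hex : ∃ n, v < w (n+1) := by
      obtain ⟨n, hn⟩ := exists_pow_lt_of_lt_one (by linarith : 0 < 1 - v) hq1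
      refine ⟨n, lt_of_lt_of_le ?_ (hwmono (Nat.le_succ n))⟩
      simp only [hwdef]; linarith
    refine ⟨Nat.find hex, ?_, Nat.find_spec hex⟩
    rcases Nat.eq_zero_or_pos (Nat.find hex) with h | h
    · rw [h, hw0]; exact hv0
    · have hm := Nat.find_min hex (Nat.pred_lt h.ne')
      have he : (Nat.find hex).pred + 1 = Nat.find hex := Nat.succ_pred_eq_of_pos h
      rw [he] at hm
      exact not_lt.mp hm
  set A : ℕ → Set Epts :=
    fun k => {p : Epts | p.1 ≠ ⊤ ∧ 1 < p.2 ∧ ang p ∈ Set.Ico (w k) (w (k+1))} with hAdef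
  have hAmeas : ∀ k, MeasurableSet (A k) :=
    fun k => ((measurable_fst (measurableSet_singleton ⊤)).compl).inter
      ((measurable_snd measurableSet_Ioi).inter (measurable_ang measurableSet_Ico))
  have hAdisj : Pairwise (Function.onFun Disjoint A) := by
    have key2 : ∀ i j : ℕ, i < j → Disjoint (A i) (A j) := by
      intro i j h
      rw [Set.disjoint_left]
      rintro p ⟨-, -, hi1, hi2⟩ ⟨-, -, hj1, hj2⟩
      have : w (i+1) ≤ w j := hwmono (Nat.succ_le_of_lt h)
      linarith
    intro i j hij
    rcases hij.lt_or_gt with h | h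
    · exact key2 _ _ h
    · exact (key2 _ _ h).symm
  have hTunion : {p : Epts | p.1 ≠ ⊤ ∧ 1 < p.2} = ⋃ k, A k := by
    ext p
    simp only [Set.mem_iUnion, hAdef, Set.mem_setOf_eq]
    constructor
    · rintro ⟨h1, h2⟩
      obtain ⟨k, hk⟩ := hcov (ang p) (ang_nonneg p) (ang_lt_one p h1 (lt_trans zero_lt_one h2))
      exact ⟨k, h1, h2, hk⟩
    · rintro ⟨k, h1, h2, -⟩; exact ⟨h1, h2⟩
  have hMsum : M = ∑' k, μ (A k) := by
    rw [hMdef, hTunion, measure_iUnion hAdisj hAmeas]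
  have hpdisj : Pairwise (Function.onFun Disjoint (fun k => Set.Ico (w k) (w (k+1)))) := by
    have key2 : ∀ i j : ℕ, i < j → Disjoint (Set.Ico (w i) (w (i+1))) (Set.Ico (w j) (w (j+1))) := by
      intro i j h
      rw [Set.disjoint_left]
      rintro v ⟨hi1, hi2⟩ ⟨hj1, hj2⟩
      have : w (i+1) ≤ w j := hwmono (Nat.succ_le_of_lt h)
      linarith
    intro i j hij
    rcases hij.lt_or_gt with h | h
    · exact key2 _ _ h
    · exact (key2 _ _ h).symm
  have hIcodecomp : Set.Ico (0:ℝ) 1 = ⋃ k, Set.Ico (w k) (w (k+1)) := by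
    ext v
    simp only [Set.mem_iUnion, Set.mem_Ico]
    constructor
    · rintro ⟨h0, h1⟩; exact hcov v h0 h1
    · rintro ⟨k, hlo, hhi⟩
      exact ⟨le_trans (hw0le k) hlo, lt_of_lt_of_le hhi (hwlt1 (k+1)).le⟩
  have hIsum : I = ∑' k, ∫⁻ v in Set.Ico (w k) (w (k+1)), ENNReal.ofReal (1 - v) ∂S := by
    rw [hIdef, hIcodecomp, lintegral_iUnion (fun k => measurableSet_Ico) hpdisj]
  have hup : ∀ k, μ (A k) ≤ ENNReal.ofReal (q ^ k) * S (Set.Ico (w k) (w (k+1))) := by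
    intro k
    have hsub : A k ⊆ {p : Epts | ENNReal.ofReal ((q ^ k)⁻¹) < p.1 + p.2 ∧
        ang p ∈ Set.Ico (w k) (w (k+1))} := by
      rintro p ⟨h1, h2, h3⟩
      refine ⟨?_, h3⟩
      by_cases hb : p.2 = ⊤
      · rw [hb, add_top]
        exact ENNReal.ofReal_lt_top
      · have hs0 : p.1 + p.2 ≠ 0 :=
          (lt_of_lt_of_le (lt_trans zero_lt_one h2) le_add_self).ne'
        have hst : p.1 + p.2 ≠ ⊤ := ENNReal.add_ne_top.mpr ⟨h1, hb⟩
        have hform := toReal_snd p h1 hb hs0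
        have hb1 : 1 < p.2.toReal := by
          have := (ENNReal.toReal_lt_toReal (by simp : (1:ℝ≥0∞) ≠ ⊤) hb).mpr h2
          simpa using this
        have h1ang : 1 - ang p ≤ q ^ k := by
          have := h3.1; rw [← hw k]; linarith
        have h1angpos : 0 < 1 - ang p := by
          have h4 := h3.2; have := hwlt1 (k+1); linarith
        have hlt : (q ^ k)⁻¹ < (p.1 + p.2).toReal := by
          have h2' : 1 < (p.1+p.2).toReal * (1 - ang p) := by rw [← hform]; exact hb1
          nlinarith [mul_inv_cancel₀ (hqk k).ne', ENNReal.toReal_nonneg (a := p.1 + p.2)]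
        calc ENNReal.ofReal ((q ^ k)⁻¹) < ENNReal.ofReal ((p.1+p.2).toReal) :=
              (ENNReal.ofReal_lt_ofReal_iff (lt_trans (inv_pos.mpr (hqk k)) hlt)).mpr hlt
          _ = p.1 + p.2 := ENNReal.ofReal_toReal hst
    calc μ (A k) ≤ μ {p : Epts | ENNReal.ofReal ((q ^ k)⁻¹) < p.1 + p.2 ∧
            ang p ∈ Set.Ico (w k) (w (k+1))} := measure_mono hsub
      _ = (ENNReal.ofReal ((q ^ k)⁻¹))⁻¹ *
            μ {p : Epts | 1 < p.1 + p.2 ∧ ang p ∈ Set.Ico (w k) (w (k+1))} :=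
          scale_slice μ hhom measurableSet_Ico (inv_pos.mpr (hqk k))
      _ = ENNReal.ofReal (q ^ k) * S (Set.Ico (w k) (w (k+1))) := by
          rw [← hS _ measurableSet_Ico, ENNReal.ofReal_inv_of_pos (hqk k), inv_inv]
  have hlow : ∀ k, ENNReal.ofReal (q ^ (k+1)) * S (Set.Ico (w k) (w (k+1))) ≤ μ (A k) := by
    intro k
    have hsub : {p : Epts | ENNReal.ofReal ((q ^ (k+1))⁻¹) < p.1 + p.2 ∧
        ang p ∈ Set.Ico (w k) (w (k+1))} ⊆ A k := by
      rintro p ⟨h1, h3⟩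
      have hpt : p.1 ≠ ⊤ := by
        intro h
        have h4 : ang p = 1 := by simp [ang, h]
        have := h3.2
        rw [h4] at this
        exact absurd this (not_lt.mpr (hwlt1 (k+1)).le)
      refine ⟨hpt, ?_, h3⟩
      by_cases hb : p.2 = ⊤
      · rw [hb]; exact ENNReal.one_lt_top
      · have hst : p.1 + p.2 ≠ ⊤ := ENNReal.add_ne_top.mpr ⟨hpt, hb⟩
        have hs0 : p.1 + p.2 ≠ 0 := by
          intro h; rw [h] at h1; simp at h1
        have hform := toReal_snd p hpt hb hs0
        have hsr : (q ^ (k+1))⁻¹ < (p.1+p.2).toReal :=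
          (ENNReal.ofReal_lt_iff_lt_toReal (inv_nonneg.mpr (hqk (k+1)).le) hst).mp h1
        have h1ang : q ^ (k+1) ≤ 1 - ang p := by
          have := h3.2; rw [← hw (k+1)]; linarith
        have hspos : 0 < (p.1+p.2).toReal := lt_trans (inv_pos.mpr (hqk (k+1))) hsr
        have hb1 : 1 < p.2.toReal := by
          have h5 : (1:ℝ) < q^(k+1) * (p.1+p.2).toReal := by
            have := mul_lt_mul_of_pos_left hsr (hqk (k+1))
            rwa [mul_inv_cancel₀ (hqk (k+1)).ne'] at this
          have h6 : (p.1+p.2).toReal * (q^(k+1)) ≤ (p.1+p.2).toReal * (1 - ang p) :=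
            mul_le_mul_of_nonneg_left h1ang hspos.le
          rw [hform]
          nlinarith [h5, h6]
        have := (ENNReal.toReal_lt_toReal (by simp : (1:ℝ≥0∞) ≠ ⊤) hb).mp (by simpa using hb1)
        exact this
    calc ENNReal.ofReal (q ^ (k+1)) * S (Set.Ico (w k) (w (k+1)))
        = μ {p : Epts | ENNReal.ofReal ((q ^ (k+1))⁻¹) < p.1 + p.2 ∧
            ang p ∈ Set.Ico (w k) (w (k+1))} := by
          rw [scale_slice μ hhom measurableSet_Ico (inv_pos.mpr (hqk (k+1))),
            ← hS _ measurableSet_Ico, ENNReal.ofReal_inv_of_pos (hqk (k+1)), inv_inv]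
      _ ≤ μ (A k) := measure_mono hsub
  have hiup : ∀ k, ∫⁻ v in Set.Ico (w k) (w (k+1)), ENNReal.ofReal (1 - v) ∂S ≤
      ENNReal.ofReal (q ^ k) * S (Set.Ico (w k) (w (k+1))) := by
    intro k
    calc ∫⁻ v in Set.Ico (w k) (w (k+1)), ENNReal.ofReal (1 - v) ∂S
        ≤ ∫⁻ _ in Set.Ico (w k) (w (k+1)), ENNReal.ofReal (q ^ k) ∂S := by
          apply setLIntegral_mono measurable_const
          intro v hv
          apply ENNReal.ofReal_le_ofReal
          rw [← hw k]; linarith [hv.1]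
      _ = ENNReal.ofReal (q ^ k) * S (Set.Ico (w k) (w (k+1))) := setLIntegral_const _ _
  have hilow : ∀ k, ENNReal.ofReal (q ^ (k+1)) * S (Set.Ico (w k) (w (k+1))) ≤
      ∫⁻ v in Set.Ico (w k) (w (k+1)), ENNReal.ofReal (1 - v) ∂S := by
    intro k
    calc ENNReal.ofReal (q ^ (k+1)) * S (Set.Ico (w k) (w (k+1)))
        = ∫⁻ _ in Set.Ico (w k) (w (k+1)), ENNReal.ofReal (q ^ (k+1)) ∂S :=
          (setLIntegral_const _ _).symm
      _ ≤ ∫⁻ v in Set.Ico (w k) (w (k+1)), ENNReal.ofReal (1 - v) ∂S := by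
          apply setLIntegral_mono ((measurable_const.sub measurable_id).ennreal_ofReal)
          intro v hv
          simp only [Pi.sub_apply, id_eq]
          apply ENNReal.ofReal_le_ofReal
          rw [← hw (k+1)]; linarith [hv.2]
  have hmul : ∀ k : ℕ, ENNReal.ofReal q * ENNReal.ofReal (q ^ k) = ENNReal.ofReal (q ^ (k+1)) := by
    intro k
    rw [← ENNReal.ofReal_mul hq0.le, ← pow_succ']
  constructor
  · rw [hMsum, hIsum, ← ENNReal.tsum_mul_left]
    apply ENNReal.tsum_le_tsum
    intro k
    calc ENNReal.ofReal q * μ (A k)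
        ≤ ENNReal.ofReal q * (ENNReal.ofReal (q ^ k) * S (Set.Ico (w k) (w (k+1)))) :=
          mul_le_mul_right (hup k) _
      _ = ENNReal.ofReal (q ^ (k+1)) * S (Set.Ico (w k) (w (k+1))) := by
          rw [← mul_assoc, hmul k]
      _ ≤ _ := hilow k
  · rw [hMsum, hIsum, ← ENNReal.tsum_mul_left]
    apply ENNReal.tsum_le_tsum
    intro k
    calc ENNReal.ofReal q * (∫⁻ v in Set.Ico (w k) (w (k+1)), ENNReal.ofReal (1 - v) ∂S)
        ≤ ENNReal.ofReal q * (ENNReal.ofReal (q ^ k) * S (Set.Ico (w k) (w (k+1)))) :=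
          mul_le_mul_right (hiup k) _
      _ = ENNReal.ofReal (q ^ (k+1)) * S (Set.Ico (w k) (w (k+1))) := by
          rw [← mul_assoc, hmul k]
      _ ≤ μ (A k) := hlow k

/-- **Normalization of the angular measure**: for a Radon measure `μ**` on `E⊓`
homogeneous of order `-1`, with angular measure `S` on `[0,1)`, the function
`H**(x) := μ**([0,x]×(1,∞])` is a probability distribution function (i.e.
`H**(x) → 1` as `x → ∞`) if and only if `∫₀¹ (1-w) S(dw) = 1`. -/
theorem angular_measure_normalization
    (μ : Measure Epts)
    (hsupp : μ Enbᶜ = 0)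
    (hRadon : ∀ A : Set Epts, closure A ⊆ Enb → μ A ≠ ⊤)
    (hhom : HomogMinusOne μ)
    (S : Measure ℝ)
    (hS : ∀ Λ : Set ℝ, MeasurableSet Λ →
      S Λ = μ {p : Epts | 1 < p.1 + p.2 ∧ ang p ∈ Λ}) :
    Tendsto (fun x : ℝ => (μ (rectNb x 1)).toReal) atTop (𝓝 1) ↔
      ∫⁻ w in Set.Ico (0 : ℝ) 1, ENNReal.ofReal (1 - w) ∂S = 1 := by
  classical
  set T : Set Epts := {p : Epts | p.1 ≠ ⊤ ∧ 1 < p.2} with hTdef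
  have hMI : μ T = ∫⁻ w in Set.Ico (0:ℝ) 1, ENNReal.ofReal (1 - w) ∂S :=
    key_measure_eq μ hhom S hS
  have hsetmono : ∀ a b : ℝ, a ≤ b → rectNb a 1 ⊆ rectNb b 1 := fun a b hab =>
    Set.prod_mono (Set.Iic_subset_Iic.mpr (ENNReal.ofReal_le_ofReal hab)) subset_rfl
  have hFmono : Monotone (fun x : ℝ => μ (rectNb x 1)) := fun a b hab =>
    measure_mono (hsetmono a b hab)
  have hFfin : ∀ x : ℝ, μ (rectNb x 1) ≠ ⊤ := by
    intro x
    apply hRadon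
    have h1 : closure (rectNb x 1) ⊆ Set.univ ×ˢ Set.Ici (ENNReal.ofReal 1) := by
      show closure (Set.Iic (ENNReal.ofReal x) ×ˢ Set.Ioi (ENNReal.ofReal 1)) ⊆ _
      rw [closure_prod_eq]
      exact Set.prod_mono (Set.subset_univ _)
        (closure_minimal Set.Ioi_subset_Ici_self isClosed_Ici)
    refine h1.trans (Set.prod_mono subset_rfl ?_)
    intro y hy
    exact lt_of_lt_of_le (by simp : (0:ℝ≥0∞) < ENNReal.ofReal 1) hy
  have hsup : (⨆ x : ℝ, μ (rectNb x 1)) = μ T := by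
    apply le_antisymm
    · apply iSup_le
      intro x
      apply measure_mono
      rintro p ⟨hp1, hp2⟩
      exact ⟨ne_top_of_le_ne_top ENNReal.ofReal_ne_top hp1, by simpa using hp2⟩
    · have hUnion : T = ⋃ n : ℕ, rectNb n 1 := by
        ext p
        simp only [hTdef, Set.mem_setOf_eq, Set.mem_iUnion, rectNb, Set.mem_prod,
          Set.mem_Iic, Set.mem_Ioi]
        constructor
        · rintro ⟨h1, h2⟩
          obtain ⟨n, hn⟩ := exists_nat_ge (p.1.toReal)
          refine ⟨n, ?_, by simpa using h2⟩
          calc p.1 = ENNReal.ofReal p.1.toReal := (ENNReal.ofReal_toReal h1).symm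
            _ ≤ ENNReal.ofReal n := ENNReal.ofReal_le_ofReal hn
        · rintro ⟨n, h1, h2⟩
          exact ⟨ne_top_of_le_ne_top ENNReal.ofReal_ne_top h1, by simpa using h2⟩
      have hdir : Directed (· ⊆ ·) (fun n : ℕ => rectNb n 1) :=
        Monotone.directed_le (fun i j hij => hsetmono i j (Nat.cast_le.mpr hij))
      rw [hUnion, hdir.measure_iUnion]
      exact iSup_le fun n => le_iSup (fun x : ℝ => μ (rectNb x 1)) (n : ℝ)
  have htd : Tendsto (fun x : ℝ => μ (rectNb x 1)) atTop (𝓝 (μ T)) := by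
    rw [← hsup]
    exact tendsto_atTop_iSup hFmono
  rw [← hMI]
  constructor
  · intro hten
    by_cases hfin : μ T = ⊤
    · exfalso
      have h2 : (2:ℝ≥0∞) < ⨆ x : ℝ, μ (rectNb x 1) := by
        rw [hsup, hfin]; simp
      obtain ⟨x, hx⟩ := lt_iSup_iff.mp h2
      have hev1 : ∀ᶠ y in atTop, (μ (rectNb y 1)).toReal < 2 :=
        hten.eventually (gt_mem_nhds (by norm_num : (1:ℝ) < 2))
      obtain ⟨y, h1y, h2y⟩ := (hev1.and (eventually_ge_atTop x)).exists
      have h3 : (2:ℝ) < (μ (rectNb y 1)).toReal := by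
        have h4 : (2:ℝ≥0∞) < μ (rectNb y 1) := lt_of_lt_of_le hx (hFmono h2y)
        have := (ENNReal.toReal_lt_toReal (by simp : (2:ℝ≥0∞) ≠ ⊤) (hFfin y)).mpr h4
        simpa using this
      linarith
    · have h5 : Tendsto (fun x : ℝ => (μ (rectNb x 1)).toReal) atTop (𝓝 (μ T).toReal) :=
        (ENNReal.tendsto_toReal hfin).comp htd
      have huniq : (1:ℝ) = (μ T).toReal := tendsto_nhds_unique hten h5
      rw [hTdef] at hfin huniq ⊢
      rw [← ENNReal.ofReal_toReal hfin, ← huniq, ENNReal.ofReal_one]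
  · intro h1
    rw [hTdef] at h1
    rw [hTdef] at htd
    rw [h1] at htd
    have := (ENNReal.tendsto_toReal (by simp : (1:ℝ≥0∞) ≠ ⊤)).comp htd
    simpa [Function.comp_def] using this
end
end

section
/- Let μ and ν be Radon measures on E⊓ = [0,∞]×(0,∞] and E⊃ = (0,∞]×[0,∞] respectively, agreeing on E₀ = (0,∞]×(0,∞] (μ|_{E₀} = ν|_{E₀}). For ε > 0 set B₁^ε = [0,ε)×[ε,∞] and B₂^ε = [ε,∞]×[0,∞]. Then for every relatively compact Borel set A ⊂ E = [0,∞]²∖{(0,0)}, the quantity μ(A ∩ B₁^ε) + ν(A ∩ B₂^ε) is the same for all 0 < ε < d(0,A)/√2; denoting this common value (μ◇ν)(A), the set function μ◇ν is a Radon measure on E. -/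
open MeasureTheory Filter Topology Set
open scoped ENNReal NNReal

noncomputable section

/-- The strip `B₁^ε = [0,ε) × [ε,∞]`. -/
def B1 (ε : ℝ) : Set Epts := Set.Iio (ENNReal.ofReal ε) ×ˢ Set.Ici (ENNReal.ofReal ε)

/-- The half-plane `B₂^ε = [ε,∞] × [0,∞]`. -/
def B2 (ε : ℝ) : Set Epts := Set.Ici (ENNReal.ofReal ε) ×ˢ Set.univ

/-- `ε < d(0,A)/√2`, i.e. every point of `A` has squared Euclidean norm `> 2ε²`. -/
def FarFromZero (ε : ℝ) (A : Set Epts) : Prop :=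
  ∀ p ∈ A, ENNReal.ofReal (2 * ε ^ 2) < p.1 * p.1 + p.2 * p.2

/-- The `y`-axis `{0} × [0,∞]`. -/
def Zax : Set Epts := {p | p.1 = 0}

lemma Zax_meas : MeasurableSet Zax := measurable_fst (measurableSet_singleton 0)

lemma B1_meas (ε : ℝ) : MeasurableSet (B1 ε) := measurableSet_Iio.prod measurableSet_Ici

lemma B2_meas (ε : ℝ) : MeasurableSet (B2 ε) := measurableSet_Ici.prod MeasurableSet.univ

lemma ofReal_two_sq (ε : ℝ) (hε : 0 < ε) :
    ENNReal.ofReal (2 * ε ^ 2)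
      = ENNReal.ofReal ε * ENNReal.ofReal ε + ENNReal.ofReal ε * ENNReal.ofReal ε := by
  rw [← ENNReal.ofReal_mul hε.le, show (2:ℝ) * ε ^ 2 = ε * ε + ε * ε by ring,
    ENNReal.ofReal_add (by positivity) (by positivity)]

lemma mem_B1_of_zero (ε : ℝ) (hε : 0 < ε) (A : Set Epts) (hfar : FarFromZero ε A) :
    A ∩ Zax ⊆ B1 ε := by
  rintro ⟨x, y⟩ ⟨hpA, hx0⟩
  simp only [Zax, mem_setOf_eq] at hx0
  have h := hfar _ hpA
  rw [hx0] at h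
  simp only [zero_mul, zero_add] at h
  have hy : ENNReal.ofReal ε ≤ y := by
    by_contra hy
    simp only [mem_Ici, not_le] at hy
    have : y * y ≤ ENNReal.ofReal ε * ENNReal.ofReal ε := mul_le_mul' hy.le hy.le
    have h2 : y * y < ENNReal.ofReal (2 * ε ^ 2) := by
      rw [ofReal_two_sq ε hε]
      exact lt_of_le_of_lt this (ENNReal.lt_add_right
        (by simp [ENNReal.ofReal_ne_top, ENNReal.mul_ne_top]) (by simp [hε]))
    exact absurd (h.trans h2) (lt_irrefl _)
  exact ⟨by simpa [hx0] using ENNReal.ofReal_pos.mpr hε, hy⟩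

lemma cover_B (ε : ℝ) (hε : 0 < ε) (A : Set Epts) (hfar : FarFromZero ε A) :
    A ⊆ B1 ε ∪ B2 ε := by
  rintro ⟨x, y⟩ hp
  by_cases hx : ENNReal.ofReal ε ≤ x
  · exact Or.inr ⟨hx, trivial⟩
  · push_neg at hx
    refine Or.inl ⟨hx, ?_⟩
    by_contra hy
    simp only [mem_Ici, not_le] at hy
    have h := hfar _ hp
    have : x * x + y * y ≤ ENNReal.ofReal (2 * ε ^ 2) := by
      rw [ofReal_two_sq ε hε]
      exact add_le_add (mul_le_mul' hx.le hx.le) (mul_le_mul' hy.le hy.le)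
    exact absurd h (not_lt.mpr this)

lemma key_eq (μ ν : Measure Epts) (hνsupp : ν Enlᶜ = 0)
    (hagree : ∀ A : Set Epts, MeasurableSet A → A ⊆ Enb ∩ Enl → μ A = ν A)
    (A : Set Epts) (hA : MeasurableSet A) (ε : ℝ) (hε : 0 < ε)
    (hfar : FarFromZero ε A) :
    μ (A ∩ B1 ε) + ν (A ∩ B2 ε) = μ (A ∩ Zax) + ν A := by
  have hεpos : (0:ℝ≥0∞) < ENNReal.ofReal ε := ENNReal.ofReal_pos.mpr hε
  have hsplitμ : μ (A ∩ B1 ε ∩ Zax) + μ ((A ∩ B1 ε) \ Zax) = μ (A ∩ B1 ε) :=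
    measure_inter_add_diff _ Zax_meas
  have hZeq : A ∩ B1 ε ∩ Zax = A ∩ Zax := by
    apply Subset.antisymm
    · exact fun p hp => ⟨hp.1.1, hp.2⟩
    · exact fun p hp => ⟨⟨hp.1, mem_B1_of_zero ε hε A hfar hp⟩, hp.2⟩
  have hdiff_sub : (A ∩ B1 ε) \ Zax ⊆ Enb ∩ Enl := by
    rintro ⟨x, y⟩ ⟨⟨hpA, hpB⟩, hpZ⟩
    simp only [Zax, mem_setOf_eq] at hpZ
    exact ⟨⟨trivial, lt_of_lt_of_le hεpos hpB.2⟩, ⟨pos_iff_ne_zero.mpr hpZ, trivial⟩⟩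
  have hμν : μ ((A ∩ B1 ε) \ Zax) = ν ((A ∩ B1 ε) \ Zax) :=
    hagree _ ((hA.inter (B1_meas ε)).diff Zax_meas) hdiff_sub
  have hν0 : ν (A ∩ B1 ε ∩ Zax) = 0 := by
    refine measure_mono_null ?_ hνsupp
    rintro ⟨x, y⟩ ⟨-, hx0⟩
    simp only [Zax, mem_setOf_eq] at hx0
    intro hmem
    exact absurd hx0 (ne_of_gt hmem.1)
  have hsplitν : ν (A ∩ B1 ε ∩ Zax) + ν ((A ∩ B1 ε) \ Zax) = ν (A ∩ B1 ε) :=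
    measure_inter_add_diff _ Zax_meas
  have hν1 : ν ((A ∩ B1 ε) \ Zax) = ν (A ∩ B1 ε) := by
    rw [← hsplitν, hν0, zero_add]
  have hdisj : Disjoint (A ∩ B1 ε) (A ∩ B2 ε) := by
    rw [disjoint_left]
    rintro p ⟨-, hp1⟩ ⟨-, hp2⟩
    exact absurd (mem_Ici.mp hp2.1) (not_le.mpr (mem_Iio.mp hp1.1))
  have huni : ν (A ∩ B1 ε) + ν (A ∩ B2 ε) = ν A := by
    rw [← measure_union hdisj (hA.inter (B2_meas ε)), ← inter_union_distrib_left,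
      inter_eq_self_of_subset_left (cover_B ε hε A hfar)]
  calc μ (A ∩ B1 ε) + ν (A ∩ B2 ε)
      = (μ (A ∩ B1 ε ∩ Zax) + μ ((A ∩ B1 ε) \ Zax)) + ν (A ∩ B2 ε) := by rw [hsplitμ]
    _ = μ (A ∩ Zax) + (ν (A ∩ B1 ε) + ν (A ∩ B2 ε)) := by
        rw [hZeq, hμν, hν1, add_assoc]
    _ = μ (A ∩ Zax) + ν A := by rw [huni]

lemma exists_far (A : Set Epts) (hA : closure A ⊆ Efull) :
    ∃ ε : ℝ, 0 < ε ∧ FarFromZero ε (closure A) := by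
  rcases (closure A).eq_empty_or_nonempty with h | h
  · exact ⟨1, one_pos, by simp [FarFromZero, h]⟩
  · have hcomp : IsCompact (closure A) := isClosed_closure.isCompact
    have hcont : Continuous (fun p : Epts => p.1 * p.1 + p.2 * p.2) := by
      have h1 : Continuous (fun p : Epts => p.1 ^ 2) :=
        (ENNReal.continuous_pow 2).comp continuous_fst
      have h2 : Continuous (fun p : Epts => p.2 ^ 2) :=
        (ENNReal.continuous_pow 2).comp continuous_snd
      simp only [← pow_two]
      exact h1.add h2
    obtain ⟨p₀, hp₀, hmin⟩ := hcomp.exists_isMinOn h hcont.continuousOn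
    have hpos : 0 < p₀.1 * p₀.1 + p₀.2 * p₀.2 := by
      have hne : p₀ ≠ (0, 0) := hA hp₀
      rcases eq_or_ne p₀.1 0 with h1 | h1
      · have h2 : p₀.2 ≠ 0 := by
          intro h2
          exact hne (Prod.ext h1 h2)
        have : p₀.2 * p₀.2 ≠ 0 := mul_ne_zero h2 h2
        exact lt_of_lt_of_le (pos_iff_ne_zero.mpr this) le_add_self
      · have : p₀.1 * p₀.1 ≠ 0 := mul_ne_zero h1 h1
        exact lt_of_lt_of_le (pos_iff_ne_zero.mpr this) le_self_add
    obtain ⟨r, hr0, hrm⟩ := ENNReal.lt_iff_exists_nnreal_btwn.mp hpos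
    have hrpos : (0:ℝ) < (r:ℝ) := by exact_mod_cast ENNReal.coe_pos.mp hr0
    refine ⟨Real.sqrt ((r:ℝ) / 2), Real.sqrt_pos.mpr (by positivity), ?_⟩
    intro p hp
    have h2e : ENNReal.ofReal (2 * Real.sqrt ((r:ℝ) / 2) ^ 2) = (r : ℝ≥0∞) := by
      rw [Real.sq_sqrt (by positivity), show 2 * ((r:ℝ)/2) = (r:ℝ) by ring,
        ENNReal.ofReal_coe_nnreal]
    rw [h2e]
    exact lt_of_lt_of_le hrm (isMinOn_iff.mp hmin p hp)

/-- **Claim 6.1**: if the Radon measures `μ` (on `E⊓`) and `ν` (on `E⊃`) agree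
on `E₀ = E⊓ ∩ E⊃`, then for every relatively compact Borel `A ⊆ E` the quantity
`μ(A ∩ B₁^ε) + ν(A ∩ B₂^ε)` does not depend on `ε ∈ (0, d(0,A)/√2)`, and the
resulting set function `μ ◇ ν` is a Radon measure on `E`. -/
theorem glued_measure_well_defined
    (μ ν : Measure Epts)
    (hμsupp : μ Enbᶜ = 0) (hνsupp : ν Enlᶜ = 0)
    (hμRadon : ∀ A : Set Epts, closure A ⊆ Enb → μ A ≠ ⊤)
    (hνRadon : ∀ A : Set Epts, closure A ⊆ Enl → ν A ≠ ⊤)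
    -- `μ` and `ν` agree on `E₀ = E⊓ ∩ E⊃`:
    (hagree : ∀ A : Set Epts, MeasurableSet A → A ⊆ Enb ∩ Enl → μ A = ν A) :
    -- (1) the defining quantity does not depend on the choice of `ε`:
    (∀ A : Set Epts, MeasurableSet A → closure A ⊆ Efull →
      ∀ ε δ : ℝ, 0 < ε → FarFromZero ε A → 0 < δ → FarFromZero δ A →
        μ (A ∩ B1 ε) + ν (A ∩ B2 ε) = μ (A ∩ B1 δ) + ν (A ∩ B2 δ)) ∧
    -- (2) the common value extends to a Radon measure `μ ◇ ν` on `E`: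
    ∃ ξ : Measure Epts,
      (∀ A : Set Epts, closure A ⊆ Efull → ξ A ≠ ⊤) ∧
      (∀ A : Set Epts, MeasurableSet A → closure A ⊆ Efull →
        ∀ ε : ℝ, 0 < ε → FarFromZero ε A → ξ A = μ (A ∩ B1 ε) + ν (A ∩ B2 ε)) := by
  constructor
  · intro A hA _ ε δ hε hfarε hδ hfarδ
    exact (key_eq μ ν hνsupp hagree A hA ε hε hfarε).trans
      (key_eq μ ν hνsupp hagree A hA δ hδ hfarδ).symm
  · refine ⟨μ.restrict Zax + ν, ?_, ?_⟩
    · intro A hclA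
      obtain ⟨ε, hε, hfar⟩ := exists_far A hclA
      have hεpos : (0:ℝ≥0∞) < ENNReal.ofReal ε := ENNReal.ofReal_pos.mpr hε
      have hC : MeasurableSet (closure A) := isClosed_closure.measurableSet
      have hkey := key_eq μ ν hνsupp hagree (closure A) hC ε hε hfar
      have h1 : μ (closure A ∩ B1 ε) ≠ ⊤ := by
        apply hμRadon
        refine (closure_inter_subset_inter_closure _ _).trans ?_
        rintro ⟨x, y⟩ ⟨-, hp2⟩
        have hmem : (x, y) ∈ Iic (ENNReal.ofReal ε) ×ˢ Ici (ENNReal.ofReal ε) :=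
          closure_minimal (fun q hq => by
              rw [B1, mem_prod, mem_Iio, mem_Ici] at hq
              exact mem_prod.mpr ⟨hq.1.le, hq.2⟩)
            (isClosed_Iic.prod isClosed_Ici) hp2
        exact ⟨trivial, lt_of_lt_of_le hεpos hmem.2⟩
      have h2 : ν (closure A ∩ B2 ε) ≠ ⊤ := by
        apply hνRadon
        refine (closure_inter_subset_inter_closure _ _).trans ?_
        rintro ⟨x, y⟩ ⟨-, hp2⟩
        have hmem : (x, y) ∈ B2 ε :=
          closure_minimal (subset_refl _) (isClosed_Ici.prod isClosed_univ) hp2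
        exact ⟨lt_of_lt_of_le hεpos hmem.1, trivial⟩
      have hle : (μ.restrict Zax + ν) A ≤ μ (closure A ∩ Zax) + ν (closure A) := by
        rw [Measure.add_apply, Measure.restrict_apply' Zax_meas]
        exact add_le_add (measure_mono (inter_subset_inter_left _ subset_closure))
          (measure_mono subset_closure)
      exact ne_top_of_le_ne_top (by rw [← hkey]; exact ENNReal.add_ne_top.mpr ⟨h1, h2⟩) hle
    · intro A hA _ ε hε hfar
      rw [Measure.add_apply, Measure.restrict_apply' Zax_meas,
        key_eq μ ν hνsupp hagree A hA ε hε hfar]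
end
end
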